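/- arXiv:2309.14039 — 2 statements merged into one kernel-verified Lean document; each statement's English description precedes it below -/
import Mathlib

section
/- For any p-port circuit — that is, a superport circuit in which every superport has exactly two vertices — there exists a collection of currents I_{kl} (1 ≤ k,l ≤ n) and voltages U_1,…,U_n satisfying axioms (C), (I), (P), (B); moreover, the currents are unique, and the voltages are unique up to adding the same constant to all of them. -/
open Finset BigOperators
open scoped Classical

namespace Superport

/-- A superport network: a finite connected simple graph on `Fin n` with conductances `c`
and `p` nonempty pairwise disjoint superports `A 0, …, A (p-1)` occupying the initial
segment of the vertices, ordered consecutively. -/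
structure Network where
  n : ℕ
  p : ℕ
  graph : SimpleGraph (Fin n)
  c : Fin n → Fin n → ℝ
  A : Fin p → Finset (Fin n)
  p_pos : 0 < p
  connected : graph.Connected
  c_symm : ∀ k l, c k l = c l k
  c_pos : ∀ k l, graph.Adj k l → 0 < c k l
  c_zero : ∀ k l, ¬ graph.Adj k l → c k l = 0
  A_nonempty : ∀ i, (A i).Nonempty
  A_disjoint : ∀ i j, i ≠ j → Disjoint (A i) (A j)
  A_ordered : ∀ i j u v, i < j → u ∈ A i → v ∈ A j → u < v
  boundary_initial : ∀ v : Fin n, (∃ i, v ∈ A i) ↔ (v : ℕ) < ∑ i, (A i).card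

namespace Network

variable (N : Network)

/-- The set of boundary vertices. -/
def M : Finset (Fin N.n) := Finset.univ.biUnion N.A

/-- The number of boundary vertices. -/
def m : ℕ := N.M.card

theorem mem_M_iff {v : Fin N.n} : v ∈ N.M ↔ ∃ i, v ∈ N.A i := by
  simp [M, Finset.mem_biUnion]

/-- The root of the superport of a boundary vertex `v` (the vertex of maximal number
in the superport containing `v`); for interior `v` we set `root v = v`. -/
noncomputable def root (v : Fin N.n) : Fin N.n :=
  if h : ∃ i, v ∈ N.A i then (N.A h.choose).max' ⟨v, h.choose_spec⟩ else v

/-- The index of the last superport. -/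
def lastPort : Fin N.p := ⟨N.p - 1, Nat.sub_lt N.p_pos Nat.one_pos⟩

theorem M_nonempty : N.M.Nonempty := by
  obtain ⟨v, hv⟩ := N.A_nonempty N.lastPort
  exact ⟨v, N.mem_M_iff.mpr ⟨N.lastPort, hv⟩⟩

theorem root_mem {v : Fin N.n} (hv : v ∈ N.M) : N.root v ∈ N.M := by
  have h : ∃ i, v ∈ N.A i := N.mem_M_iff.mp hv
  rw [root, dif_pos h]
  exact N.mem_M_iff.mpr ⟨h.choose, (N.A h.choose).max'_mem _⟩

theorem root_eq_self_of_max {v : Fin N.n} (hv : v ∈ N.M) (hmax : ∀ u ∈ N.M, u ≤ v) :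
    N.root v = v := by
  have h : ∃ i, v ∈ N.A i := N.mem_M_iff.mp hv
  rw [root, dif_pos h]
  exact le_antisymm (hmax _ (N.mem_M_iff.mpr ⟨h.choose, (N.A h.choose).max'_mem _⟩))
    (Finset.le_max' _ _ h.choose_spec)

/-- Axioms (C), (I), (P), (B) for voltages `U`, currents `I`, and prescribed voltage
differences `ΔU` (only the values of `ΔU` at non-root boundary vertices are relevant). -/
def Axioms (ΔU U : Fin N.n → ℝ) (I : Fin N.n → Fin N.n → ℝ) : Prop :=
  (∀ k l, I k l = N.c k l * (U k - U l)) ∧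
  (∀ k, k ∉ N.M → ∑ l, I k l = 0) ∧
  (∀ i : Fin N.p, i ≠ N.lastPort → ∑ k ∈ N.A i, ∑ l, I k l = 0) ∧
  (∀ k, k ∈ N.M → N.root k ≠ k → U k - U (N.root k) = ΔU k)

/-- The weight of a subgraph: the product of the conductances of its edges. -/
noncomputable def weight (H : SimpleGraph (Fin N.n)) : ℝ :=
  ∏ e ∈ (Set.toFinite H.edgeSet).toFinset, Sym2.lift ⟨N.c, N.c_symm⟩ e

/-- The number of edges of a subgraph. -/
noncomputable def edgeCount (H : SimpleGraph (Fin N.n)) : ℕ :=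
  (Set.toFinite H.edgeSet).toFinset.card

/-- Two vertices lie in a common superport. -/
def samePort (u v : Fin N.n) : Prop := ∃ i, u ∈ N.A i ∧ v ∈ N.A i

/-- The `X`-equivalence: two boundary vertices not in `X` are equivalent iff they lie in
the same superport; each interior vertex and each vertex of `X` forms a singleton class.
For `X = ∅` this is the equivalence relation `∼`. -/
def xSetoid (X : Set (Fin N.n)) : Setoid (Fin N.n) where
  r u v := u = v ∨ (u ∉ X ∧ v ∉ X ∧ N.samePort u v)
  iseqv := by
    constructor
    · intro u; exact Or.inl rfl
    · rintro u v (rfl | ⟨hu, hv, i, hui, hvi⟩)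
      · exact Or.inl rfl
      · exact Or.inr ⟨hv, hu, i, hvi, hui⟩
    · rintro u v w huv hvw
      rcases huv with rfl | ⟨hu, hv, i, hui, hvi⟩
      · exact hvw
      rcases hvw with rfl | ⟨hv', hw, j, hvj, hwj⟩
      · exact Or.inr ⟨hu, hv, i, hui, hvi⟩
      · have hij : i = j := by
          by_contra hij
          exact (Finset.disjoint_left.mp (N.A_disjoint i j hij) hvi) hvj
        exact Or.inr ⟨hu, hw, i, hui, hij ▸ hwj⟩

/-- The quotient of a graph `H` by an equivalence relation `s`: classes `a ≠ b` are
adjacent iff some representatives are adjacent in `H`. -/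
def quotGraph (H : SimpleGraph (Fin N.n)) (s : Setoid (Fin N.n)) :
    SimpleGraph (Quotient s) where
  Adj a b := a ≠ b ∧ ∃ u v, H.Adj u v ∧ Quotient.mk s u = a ∧ Quotient.mk s v = b
  symm := by
    constructor
    rintro a b ⟨hab, u, v, huv, hu, hv⟩
    exact ⟨hab.symm, v, u, huv.symm, hv, hu⟩
  loopless := by
    constructor
    rintro a ⟨hab, -⟩
    exact hab rfl

/-- A spanning forest of the network. -/
def IsSpanningForest (H : SimpleGraph (Fin N.n)) : Prop := H ≤ N.graph ∧ H.IsAcyclic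

/-- A spanning forest becomes a spanning tree in the quotient by the `X`-equivalence
(in the multigraph sense): the quotient is connected and the number of edges of the
forest is one less than the number of equivalence classes.  For `X = {i}` this is
"valid relative to the vertex `i`"; for `X = ∅` this is "valid". -/
def IsValidRel (X : Set (Fin N.n)) (H : SimpleGraph (Fin N.n)) : Prop :=
  N.IsSpanningForest H ∧ (N.quotGraph H (N.xSetoid X)).Connected ∧
    N.edgeCount H + 1 = Nat.card (Quotient (N.xSetoid X))

/-- A valid forest: a spanning forest which becomes a spanning tree in the quotient
by the equivalence `∼`. -/
def IsValidForest (H : SimpleGraph (Fin N.n)) : Prop := N.IsValidRel ∅ H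

/-- The sign `sgn(H, i, j)` of a spanning forest `H` with respect to vertices `i, j`. -/
noncomputable def sgnIJ (H : SimpleGraph (Fin N.n)) (i j : Fin N.n) : ℝ :=
  if i = j ∨ ¬ (N.quotGraph H (N.xSetoid {i, j})).Reachable
      (Quotient.mk (N.xSetoid {i, j}) i) (Quotient.mk (N.xSetoid {i, j}) j)
  then 1 else -1

/-- The type of non-root boundary vertices. -/
abbrev NonRoot := {v : Fin N.n // v ∈ N.M ∧ N.root v ≠ v}

/-- The type of boundary vertices. -/
abbrev Bdry := {v : Fin N.n // v ∈ N.M}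

/-- `L` is the response matrix of the superport network: for any admissible voltages and
currents, the incoming currents at the non-root boundary vertices are obtained from the
prescribed voltage differences by multiplication by `L`. -/
def IsResponse (L : Matrix N.NonRoot N.NonRoot ℝ) : Prop :=
  ∀ (ΔU U : Fin N.n → ℝ) (I : Fin N.n → Fin N.n → ℝ), N.Axioms ΔU U I →
    ∀ x : N.NonRoot, (∑ l, I x.1 l) = ∑ y : N.NonRoot, L x y * ΔU y.1

/-- `C` is the response matrix of the electrical network obtained by unifying all the
superports: same graph and conductances, boundary vertices `M`; axioms (C) and (I). -/
def IsElecResponse (C : Matrix N.Bdry N.Bdry ℝ) : Prop :=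
  ∀ (Ub : N.Bdry → ℝ) (U : Fin N.n → ℝ) (I : Fin N.n → Fin N.n → ℝ),
    (∀ k l, I k l = N.c k l * (U k - U l)) →
    (∀ k, k ∉ N.M → ∑ l, I k l = 0) →
    (∀ v : N.Bdry, U v.1 = Ub v) →
    ∀ v : N.Bdry, (∑ l, I v.1 l) = ∑ u : N.Bdry, C v u * Ub u

/-- The sum of the weights of all valid forests. -/
noncomputable def validForestSum : ℝ :=
  ∑ H ∈ Finset.univ.filter (fun H => N.IsValidForest H), N.weight H

end Network
end Superport

/-!
The constraints (I), (P), (B) on the voltages form a linear map `U ↦ (…)` from `ℝⁿ` into a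
space of dimension `(n - m) + (p - 1) + (m - p) = n - 1`, and (C) then determines the currents.
If `U` lies in the kernel, the net currents vanish at interior vertices and sum to zero over
every superport (over the last one because all net currents sum to zero), while `U` is
constant on each superport; hence the dissipated energy `∑ c_kl (U_k - U_l)² = 2 ∑ U_k J_k`
vanishes, so `U` is constant along edges and, the graph being connected, constant. The kernel
is thus at most one-dimensional, which gives uniqueness, and by rank–nullity the map is onto,
which gives existence.
-/

theorem SimpleGraph.Reachable.apply_eq_of_forall_adj {V α : Type*} {G : SimpleGraph V}
    {f : V → α} (h : ∀ u v, G.Adj u v → f u = f v) {u v : V} (huv : G.Reachable u v) :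
    f u = f v := by
  obtain ⟨w⟩ := huv
  induction w with
  | nil => rfl
  | cons hadj _ ih => exact (h _ _ hadj).trans ih

namespace Superport

section NetCurrent

variable {ι : Type*} [Fintype ι] (c : ι → ι → ℝ)

noncomputable def netCurrent : (ι → ℝ) →ₗ[ℝ] ι → ℝ where
  toFun U k := ∑ l, c k l * (U k - U l)
  map_add' U V := by
    ext k
    simp only [Pi.add_apply, ← Finset.sum_add_distrib]
    exact Finset.sum_congr rfl fun l _ => by ring
  map_smul' a U := by
    ext k
    simp only [Pi.smul_apply, smul_eq_mul, RingHom.id_apply, Finset.mul_sum]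
    exact Finset.sum_congr rfl fun l _ => by ring

theorem netCurrent_apply (U : ι → ℝ) (k : ι) :
    netCurrent c U k = ∑ l, c k l * (U k - U l) := rfl

variable {c}

theorem sum_netCurrent_eq_zero (hc : ∀ k l, c k l = c l k) (U : ι → ℝ) :
    ∑ k, netCurrent c U k = 0 := by
  have h : ∑ k, ∑ l, c k l * (U k - U l) = ∑ k, ∑ l, -(c k l * (U k - U l)) := by
    rw [Finset.sum_comm]
    exact Finset.sum_congr rfl fun k _ => Finset.sum_congr rfl fun l _ => by rw [hc]; ring
  simp only [Finset.sum_neg_distrib] at h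
  simp only [netCurrent_apply]
  linarith

theorem two_mul_sum_mul_netCurrent (hc : ∀ k l, c k l = c l k) (U : ι → ℝ) :
    2 * ∑ k, U k * netCurrent c U k = ∑ k, ∑ l, c k l * (U k - U l) ^ 2 := by
  have hsplit : ∀ k l, c k l * (U k - U l) ^ 2
      = U k * (c k l * (U k - U l)) + U l * (c l k * (U l - U k)) := by
    intro k l; rw [hc l k]; ring
  simp only [hsplit, Finset.sum_add_distrib]
  rw [Finset.sum_comm (f := fun k l => U l * (c l k * (U l - U k))), ← two_mul]
  simp only [netCurrent_apply, Finset.mul_sum]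

theorem eq_of_sum_mul_netCurrent_eq_zero (hc : ∀ k l, c k l = c l k) (hc₀ : ∀ k l, 0 ≤ c k l)
    {U : ι → ℝ} (hU : ∑ k, U k * netCurrent c U k = 0) {k l : ι} (hkl : 0 < c k l) :
    U k = U l := by
  have henergy : ∑ k, ∑ l, c k l * (U k - U l) ^ 2 = 0 := by
    rw [← two_mul_sum_mul_netCurrent hc, hU, mul_zero]
  have hterm_nonneg : ∀ k l, 0 ≤ c k l * (U k - U l) ^ 2 :=
    fun k l => mul_nonneg (hc₀ k l) (sq_nonneg _)
  have hterm : c k l * (U k - U l) ^ 2 = 0 := by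
    rw [Finset.sum_eq_zero_iff_of_nonneg fun k _ => Finset.sum_nonneg fun l _ =>
      hterm_nonneg k l] at henergy
    exact (Finset.sum_eq_zero_iff_of_nonneg fun l _ => hterm_nonneg k l).mp
      (henergy k (Finset.mem_univ k)) l (Finset.mem_univ l)
  exact sub_eq_zero.mp <| (pow_eq_zero_iff two_ne_zero).mp <|
    (mul_eq_zero.mp hterm).resolve_left hkl.ne'

end NetCurrent

namespace Network

variable (N : Network)

theorem c_nonneg (k l : Fin N.n) : 0 ≤ N.c k l := by
  by_cases h : N.graph.Adj k l
  · exact (N.c_pos k l h).le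
  · rw [N.c_zero k l h]

theorem port_eq_of_mem {i j : Fin N.p} {v : Fin N.n} (hi : v ∈ N.A i) (hj : v ∈ N.A j) :
    i = j := by
  by_contra h
  exact Finset.disjoint_left.mp (N.A_disjoint i j h) hi hj

theorem root_eq_max' {i : Fin N.p} {v : Fin N.n} (hv : v ∈ N.A i) :
    N.root v = (N.A i).max' (N.A_nonempty i) := by
  have h : ∃ j, v ∈ N.A j := ⟨i, hv⟩
  rw [root, dif_pos h]
  congr 1
  exact congrArg N.A (N.port_eq_of_mem h.choose_spec hv)

theorem sum_M_eq_sum_ports (f : Fin N.n → ℝ) : ∑ k ∈ N.M, f k = ∑ i, ∑ k ∈ N.A i, f k :=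
  Finset.sum_biUnion fun i _ j _ hij => N.A_disjoint i j hij

theorem sum_eq_sum_M {f : Fin N.n → ℝ} (hf : ∀ k, k ∉ N.M → f k = 0) :
    ∑ k, f k = ∑ k ∈ N.M, f k :=
  (Finset.sum_subset (Finset.subset_univ _) fun k _ hk => hf k hk).symm

variable {N}

theorem sum_port_eq_zero_of_sum_eq_zero {J : Fin N.n → ℝ} (hsum : ∑ k, J k = 0)
    (hI : ∀ k, k ∉ N.M → J k = 0) (hP : ∀ i, i ≠ N.lastPort → ∑ k ∈ N.A i, J k = 0)
    (i : Fin N.p) : ∑ k ∈ N.A i, J k = 0 := by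
  by_cases hi : i = N.lastPort
  · rwa [N.sum_eq_sum_M hI, N.sum_M_eq_sum_ports,
      Finset.sum_eq_single N.lastPort (fun j _ hj => hP j hj) (by simp), ← hi] at hsum
  · exact hP i hi

theorem sum_mul_eq_zero_of_const_on_ports {U J : Fin N.n → ℝ}
    (hU : ∀ k, k ∈ N.M → U k = U (N.root k))
    (hI : ∀ k, k ∉ N.M → J k = 0) (hP : ∀ i, ∑ k ∈ N.A i, J k = 0) :
    ∑ k, U k * J k = 0 := by
  rw [N.sum_eq_sum_M fun k hk => by rw [hI k hk, mul_zero], N.sum_M_eq_sum_ports]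
  refine Finset.sum_eq_zero fun i _ => ?_
  calc ∑ k ∈ N.A i, U k * J k = ∑ k ∈ N.A i, U ((N.A i).max' (N.A_nonempty i)) * J k :=
        Finset.sum_congr rfl fun k hk => by
          rw [hU k (N.mem_M_iff.mpr ⟨i, hk⟩), N.root_eq_max' hk]
    _ = 0 := by rw [← Finset.mul_sum, hP i, mul_zero]

variable (N)

abbrev ConstraintSpace : Type :=
  ({v : Fin N.n // v ∉ N.M} → ℝ) × ({i : Fin N.p // i ≠ N.lastPort} → ℝ) × (N.NonRoot → ℝ)

/-- The left-hand sides of (I), (P), (B) once the currents are given by (C). -/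
noncomputable def constraintMap : (Fin N.n → ℝ) →ₗ[ℝ] N.ConstraintSpace :=
  let proj (k : Fin N.n) : (Fin N.n → ℝ) →ₗ[ℝ] ℝ := LinearMap.proj k
  (LinearMap.pi fun v : {v // v ∉ N.M} => proj v.1 ∘ₗ netCurrent N.c).prod <|
    (LinearMap.pi fun i : {i // i ≠ N.lastPort} =>
      ∑ k ∈ N.A i.1, proj k ∘ₗ netCurrent N.c).prod <|
    LinearMap.pi fun x : N.NonRoot => proj x.1 - proj (N.root x.1)

theorem constraintMap_apply (U : Fin N.n → ℝ) :
    N.constraintMap U = (fun v => netCurrent N.c U v.1,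
      fun i => ∑ k ∈ N.A i.1, netCurrent N.c U k, fun x => U x.1 - U (N.root x.1)) := by
  ext <;> simp [constraintMap]

theorem axioms_iff {ΔU U : Fin N.n → ℝ} {I : Fin N.n → Fin N.n → ℝ} :
    N.Axioms ΔU U I ↔
      (∀ k l, I k l = N.c k l * (U k - U l)) ∧ N.constraintMap U = (0, 0, fun x => ΔU x.1) := by
  refine and_congr_right fun hC => ?_
  have hJ : ∀ k, ∑ l, I k l = netCurrent N.c U k := fun k => by simp only [hC, netCurrent_apply]
  simp only [constraintMap_apply, Prod.ext_iff, funext_iff, hJ, Subtype.forall, Pi.zero_apply]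
  refine and_congr Iff.rfl (and_congr Iff.rfl ⟨fun hB k hk => hB k hk.1 hk.2, ?_⟩)
  exact fun hB k hk hr => hB k ⟨hk, hr⟩

theorem ker_constraintMap_le : LinearMap.ker N.constraintMap ≤ ℝ ∙ (1 : Fin N.n → ℝ) := by
  intro U hU
  rw [LinearMap.mem_ker, constraintMap_apply] at hU
  simp only [Prod.ext_iff, funext_iff, Subtype.forall, Prod.fst_zero, Prod.snd_zero,
    Pi.zero_apply, sub_eq_zero] at hU
  obtain ⟨hI, hP, hB⟩ := hU
  have hroot : ∀ k, k ∈ N.M → U k = U (N.root k) := fun k hk => by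
    by_cases hr : N.root k = k
    · rw [hr]
    · exact hB k ⟨hk, hr⟩
  have hports := sum_port_eq_zero_of_sum_eq_zero (sum_netCurrent_eq_zero N.c_symm U) hI hP
  have hadj : ∀ k l, N.graph.Adj k l → U k = U l := fun k l hkl =>
    eq_of_sum_mul_netCurrent_eq_zero N.c_symm N.c_nonneg
      (sum_mul_eq_zero_of_const_on_ports hroot hI hports) (N.c_pos k l hkl)
  obtain ⟨v₀, -⟩ := N.M_nonempty
  refine Submodule.mem_span_singleton.mpr ⟨U v₀, funext fun k => ?_⟩
  simpa using ((N.connected k v₀).apply_eq_of_forall_adj hadj).symm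

theorem card_roots : (N.M.filter fun v => N.root v = v).card = N.p := by
  have himage : N.M.filter (fun v => N.root v = v)
      = Finset.univ.image fun i => (N.A i).max' (N.A_nonempty i) := by
    ext v
    simp only [Finset.mem_filter, Finset.mem_image, Finset.mem_univ, true_and, N.mem_M_iff]
    constructor
    · rintro ⟨⟨i, hi⟩, hr⟩
      exact ⟨i, by rw [← N.root_eq_max' hi, hr]⟩
    · rintro ⟨i, rfl⟩
      have hmem := (N.A i).max'_mem (N.A_nonempty i)
      exact ⟨⟨i, hmem⟩, N.root_eq_max' hmem⟩
  rw [himage, Finset.card_image_of_injective, Finset.card_univ, Fintype.card_fin]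
  intro i j (hij : (N.A i).max' _ = (N.A j).max' _)
  exact N.port_eq_of_mem ((N.A i).max'_mem _) (hij ▸ (N.A j).max'_mem _)

theorem card_nonRoot : Fintype.card N.NonRoot = N.m - N.p := by
  rw [Fintype.card_subtype, m, ← N.card_roots, ← Finset.card_sdiff_of_subset (filter_subset _ _)]
  congr 1
  ext v
  simp only [Finset.mem_filter, Finset.mem_univ, true_and, Finset.mem_sdiff]
  tauto

theorem finrank_constraintSpace : Module.finrank ℝ N.ConstraintSpace = N.n - 1 := by
  have hp : N.p ≤ N.m := N.card_roots ▸ Finset.card_filter_le _ _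
  have hm : N.m ≤ N.n := (Finset.card_le_univ _).trans_eq (Fintype.card_fin _)
  simp only [Module.finrank_prod, Module.finrank_fintype_fun_eq_card, card_nonRoot,
    Fintype.card_subtype_compl, Fintype.card_fin, Fintype.card_coe, Fintype.card_subtype_eq]
  rw [m] at hp hm ⊢
  have := N.p_pos
  omega

theorem constraintMap_surjective : Function.Surjective N.constraintMap := by
  rw [← LinearMap.range_eq_top]
  refine Submodule.eq_top_of_finrank_eq (le_antisymm (Submodule.finrank_le _) ?_)
  have hker : Module.finrank ℝ (LinearMap.ker N.constraintMap) ≤ 1 :=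
    (Submodule.finrank_mono N.ker_constraintMap_le).trans
      ((finrank_span_le_card _).trans_eq (by simp))
  have := N.constraintMap.finrank_range_add_finrank_ker
  rw [Module.finrank_fintype_fun_eq_card, Fintype.card_fin] at this
  rw [finrank_constraintSpace]
  omega

end Network

theorem exists_unique_voltages_currents_multiport_general (N : Network)
    (ΔU : Fin N.n → ℝ) :
    (∃ U I, N.Axioms ΔU U I) ∧
    (∀ U₁ I₁ U₂ I₂, N.Axioms ΔU U₁ I₁ → N.Axioms ΔU U₂ I₂ →
      I₁ = I₂ ∧ ∃ const : ℝ, ∀ k, U₁ k = U₂ k + const) := by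
  simp only [Network.axioms_iff]
  constructor
  · obtain ⟨U, hU⟩ := N.constraintMap_surjective (0, 0, fun x => ΔU x.1)
    exact ⟨U, _, fun k l => rfl, hU⟩
  · rintro U₁ I₁ U₂ I₂ ⟨hC₁, hU₁⟩ ⟨hC₂, hU₂⟩
    have hker : U₁ - U₂ ∈ LinearMap.ker N.constraintMap := by
      rw [LinearMap.mem_ker, map_sub, hU₁, hU₂, sub_self]
    obtain ⟨a, ha⟩ := Submodule.mem_span_singleton.mp (N.ker_constraintMap_le hker)
    have hU : ∀ k, U₁ k = U₂ k + a := fun k => by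
      have := congrFun ha k
      simp only [Pi.smul_apply, Pi.one_apply, smul_eq_mul, mul_one, Pi.sub_apply] at this
      linarith
    exact ⟨funext₂ fun k l => by rw [hC₁, hC₂, hU k, hU l]; ring, a, hU⟩

/-- **Existence and uniqueness for `p`-port circuits** (superport circuits in which every
superport consists of exactly two vertices). -/
theorem exists_unique_voltages_currents_multiport (N : Network)
    (hport : ∀ i, (N.A i).card = 2) (ΔU : Fin N.n → ℝ) :
    (∃ U I, N.Axioms ΔU U I) ∧
    (∀ U₁ I₁ U₂ I₂, N.Axioms ΔU U₁ I₁ → N.Axioms ΔU U₂ I₂ →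
      I₁ = I₂ ∧ ∃ const : ℝ, ∀ k, U₁ k = U₂ k + const) :=
  exists_unique_voltages_currents_multiport_general N ΔU

end Superport
end

section
/- Let a spanning forest G of a superport network and a partition of the boundary set M into subsets X, Y, Z, W satisfy conditions (1)–(3). Let e_1,…,e_n be a sequence of oriented edges forming a simple oriented cycle in the quotient graph G/∼, and suppose the union e_1 ∪ … ∪ e_n splits in G into disjoint paths u_1…v_1, …, u_l…v_l in the cyclic order in which they appear along the cycle. Then, after possibly reversing the direction of the cycle, one of the following holds: (XY) u_k ∈ X and v_k ∈ Y for every k = 1,…,l; or (ZW) u_k ∈ Z and v_k ∈ W for every k = 1,…,l. -/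
open Finset BigOperators
open scoped Classical

namespace Superport
namespace Network

variable (N : Network)

/-- The vertex set of the connected component `comp` of a subgraph `H`. -/
noncomputable def compFinset (H : SimpleGraph (Fin N.n)) (comp : H.ConnectedComponent) :
    Finset (Fin N.n) :=
  Finset.univ.filter (fun v => H.connectedComponentMk v = comp)

/-- Conditions (1)–(3) of Lemma 8.4 on a spanning forest `H` and a partition of the
boundary set `M` into four subsets `X, Y, Z, W`:
(1) the last superport is contained in `W`;
(2) every other superport meets `X` and `Y` in sets of equal cardinality `0` or `1`,
    complementary to its intersection with `Z`;
(3) every component of `H` meets `X` and `Y` in sets of equal cardinality `0` or `1`,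
    complementary to its intersection with `W`. -/
def Cond123 (H : SimpleGraph (Fin N.n)) (X Y Z W : Finset (Fin N.n)) : Prop :=
  (X ∪ Y ∪ Z ∪ W = N.M) ∧
  Disjoint X Y ∧ Disjoint X Z ∧ Disjoint X W ∧
  Disjoint Y Z ∧ Disjoint Y W ∧ Disjoint Z W ∧
  (N.A N.lastPort ⊆ W) ∧
  (∀ k : Fin N.p, k ≠ N.lastPort →
    (X ∩ N.A k).card = (Y ∩ N.A k).card ∧ (X ∩ N.A k).card + (Z ∩ N.A k).card = 1) ∧
  (∀ comp : H.ConnectedComponent,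
    (X ∩ N.compFinset H comp).card = (Y ∩ N.compFinset H comp).card ∧
    (X ∩ N.compFinset H comp).card + (W ∩ N.compFinset H comp).card = 1)

/-- The signed sum `Σ_{(X,Y,Z,W,G)} sgn(G,X,Y,Z,W)·w(G)` over all spanning forests `G`
and partitions `X ⊔ Y ⊔ Z ⊔ W = M` satisfying conditions (1)–(3).  The sign
`(−1)^{|X|}·sgn(σ∘τ)` is expressed via the (unique, whenever conditions (1)–(3) hold)
bijections `σ : X → Y` matching vertices in the same component of `G` and `τ : Y → X`
matching vertices in the same superport; summation over `σ` and `τ` subject to these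
properties produces exactly the term `sgn(G,X,Y,Z,W)·w(G)`. -/
noncomputable def signedTupleSum : ℝ :=
  ∑ H ∈ Finset.univ.filter (fun H => N.IsSpanningForest H),
    ∑ X ∈ N.M.powerset, ∑ Y ∈ N.M.powerset, ∑ Z ∈ N.M.powerset, ∑ W ∈ N.M.powerset,
      if N.Cond123 H X Y Z W then
        (∑ σ ∈ Finset.univ.filter (fun σ : {x // x ∈ X} ≃ {y // y ∈ Y} =>
              ∀ x, H.Reachable x.1 (σ x).1),
          ∑ τ ∈ Finset.univ.filter (fun τ : {y // y ∈ Y} ≃ {x // x ∈ X} =>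
              ∀ y, N.samePort y.1 (τ y).1),
            (-1 : ℝ) ^ X.card * ((Equiv.Perm.sign (τ.trans σ) : ℤ) : ℝ)) * N.weight H
      else 0

end Network
end Superport

/-!
Along the cycle, the `H`-paths `u k … v k` lie in single components of `H` and the jumps
`v k ∼ u (k + 1)` stay inside single superports. By conditions (1)–(3), a superport other than
the last one (which lies in `W`) contains at most one vertex of `X ∪ Z` and at most one of
`Y ∪ Z`, and a component of `H` at most one of `X ∪ W` and at most one of `Y ∪ W`. Hence a `Z` at some `v k` forces a `W` at
`u (k + 1)`, which forces a `Z` at `v (k + 1)`, and so on around the cycle; a `Z` at some `u k`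
propagates backwards in the same way, and a `W` anywhere produces a `Z` at the other end of its
path. If neither `Z` nor `W` occurs, the same exclusions force `X` and `Y` to alternate.
-/

theorem SimpleGraph.Walk.IsPath.ne_of_length_pos {V : Type*} {G : SimpleGraph V} {a b : V}
    {p : G.Walk a b} (hp : p.IsPath) (hlen : 0 < p.length) : a ≠ b := by
  rintro rfl
  exact SimpleGraph.Walk.not_nil_iff_lt_length.mpr hlen (SimpleGraph.Walk.isPath_iff_nil.mp hp)

theorem Finset.eq_of_mem_of_card_inter_add_card_inter_le_one {α : Type*} [DecidableEq α]
    {S S' T : Finset α} (h : #(S ∩ T) + #(S' ∩ T) ≤ 1) {a b : α}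
    (ha : a ∈ (S ∪ S') ∩ T) (hb : b ∈ (S ∪ S') ∩ T) : a = b := by
  have hcard : #((S ∪ S') ∩ T) ≤ 1 := by
    rw [union_inter_distrib_right]
    exact (card_union_le _ _).trans h
  exact card_le_one.mp hcard a ha b hb

theorem ZMod.forall_of_add_one {l : ℕ} [NeZero l] {p : ZMod l → Prop} {a : ZMod l}
    (ha : p a) (hstep : ∀ k, p k → p (k + 1)) : ∀ k, p k := by
  have hshift : ∀ j : ℕ, p (a + j) := by
    intro j
    induction j with
    | zero => simpa using ha
    | succ j ih => simpa [add_assoc] using hstep _ ih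
  intro k
  simpa using hshift (k - a).val

theorem ZMod.forall_of_sub_one {l : ℕ} [NeZero l] {p : ZMod l → Prop} {a : ZMod l}
    (ha : p a) (hstep : ∀ k, p k → p (k - 1)) : ∀ k, p k := by
  have hneg : ∀ k, p (-k) :=
    ZMod.forall_of_add_one (p := fun k => p (-k)) (a := -a) (by simpa using ha)
      fun k hk => by
        show p (-(k + 1))
        rw [neg_add, ← sub_eq_add_neg]
        exact hstep _ hk
  intro k
  simpa using hneg (-k)

namespace Superport
namespace Network

variable {N : Network} {H : SimpleGraph (Fin N.n)} {X Y Z W : Finset (Fin N.n)}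
  {a b : Fin N.n}

theorem samePort_symm (h : N.samePort a b) : N.samePort b a :=
  let ⟨i, ha, hb⟩ := h
  ⟨i, hb, ha⟩

namespace Cond123

theorem symm (hc : N.Cond123 H X Y Z W) : N.Cond123 H Y X Z W := by
  obtain ⟨hM, hXY, hXZ, hXW, hYZ, hYW, hZW, hlast, hports, hcomps⟩ := hc
  refine ⟨by rw [← hM, union_comm Y X], hXY.symm, hYZ, hYW, hXZ, hXW, hZW, hlast,
    fun i hi => ?_, fun C => ?_⟩
  · have := hports i hi
    omega
  · have := hcomps C
    omega

theorem mem_cases (hc : N.Cond123 H X Y Z W) (ha : a ∈ N.M) :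
    a ∈ X ∨ a ∈ Y ∨ a ∈ Z ∨ a ∈ W := by
  rw [← hc.1] at ha
  simpa [or_assoc] using ha

theorem eq_of_samePort (hc : N.Cond123 H X Y Z W) (hab : N.samePort a b)
    (ha : a ∈ X ∨ a ∈ Z) (hb : b ∈ X ∨ b ∈ Z) : a = b := by
  obtain ⟨-, -, hXZ, hXW, -, -, hZW, hlast, hports, -⟩ := hc
  obtain ⟨i, hai, hbi⟩ := hab
  have hi : i ≠ N.lastPort := by
    rintro rfl
    rcases ha with ha | ha
    · exact disjoint_left.mp hXW ha (hlast hai)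
    · exact disjoint_left.mp hZW ha (hlast hai)
  exact eq_of_mem_of_card_inter_add_card_inter_le_one (hports i hi).2.le
    (by simp [ha, hai]) (by simp [hb, hbi])

theorem eq_of_reachable (hc : N.Cond123 H X Y Z W) (hab : H.Reachable a b)
    (ha : a ∈ X ∨ a ∈ W) (hb : b ∈ X ∨ b ∈ W) : a = b := by
  obtain ⟨-, -, -, -, -, -, -, -, -, hcomps⟩ := hc
  exact eq_of_mem_of_card_inter_add_card_inter_le_one (hcomps (H.connectedComponentMk a)).2.le
    (by simp [compFinset, ha]) (by simp [compFinset, hb, hab.symm])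

theorem mem_W_of_samePort (hc : N.Cond123 H X Y Z W) (hab : N.samePort a b) (hne : a ≠ b)
    (ha : a ∈ Z) (hb : b ∈ N.M) : b ∈ W := by
  rcases hc.mem_cases hb with hbX | hbY | hbZ | hbW
  · exact absurd (hc.eq_of_samePort hab (.inr ha) (.inl hbX)) hne
  · exact absurd (hc.symm.eq_of_samePort hab (.inr ha) (.inl hbY)) hne
  · exact absurd (hc.eq_of_samePort hab (.inr ha) (.inr hbZ)) hne
  · exact hbW

theorem mem_Z_of_reachable (hc : N.Cond123 H X Y Z W) (hab : H.Reachable a b) (hne : a ≠ b)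
    (ha : a ∈ W) (hb : b ∈ N.M) : b ∈ Z := by
  rcases hc.mem_cases hb with hbX | hbY | hbZ | hbW
  · exact absurd (hc.eq_of_reachable hab (.inr ha) (.inl hbX)) hne
  · exact absurd (hc.symm.eq_of_reachable hab (.inr ha) (.inl hbY)) hne
  · exact hbZ
  · exact absurd (hc.eq_of_reachable hab (.inr ha) (.inr hbW)) hne

end Cond123

/-- A cycle in `H/∼`, split into the `H`-paths `u k … v k`. -/
structure IsAlternatingCycle (H : SimpleGraph (Fin N.n)) {l : ℕ} (u v : ZMod l → Fin N.n) :
    Prop where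
  reachable : ∀ k, H.Reachable (u k) (v k)
  ne : ∀ k, u k ≠ v k
  samePort : ∀ k, N.samePort (v k) (u (k + 1))
  ne_succ : ∀ k, v k ≠ u (k + 1)

namespace IsAlternatingCycle

variable {l : ℕ} {u v : ZMod l → Fin N.n}

theorem right_mem_M (hC : N.IsAlternatingCycle H u v) (k : ZMod l) : v k ∈ N.M :=
  let ⟨i, hi, _⟩ := hC.samePort k
  N.mem_M_iff.mpr ⟨i, hi⟩

theorem left_mem_M (hC : N.IsAlternatingCycle H u v) (k : ZMod l) : u k ∈ N.M := by
  obtain ⟨i, -, hi⟩ := hC.samePort (k - 1)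
  rw [sub_add_cancel] at hi
  exact N.mem_M_iff.mpr ⟨i, hi⟩

variable [NeZero l]

theorem forall_right_mem_Z (hc : N.Cond123 H X Y Z W) (hC : N.IsAlternatingCycle H u v)
    {k₀ : ZMod l} (h : v k₀ ∈ Z) : ∀ k, v k ∈ Z ∧ u k ∈ W := by
  have hW : ∀ k, v k ∈ Z → u (k + 1) ∈ W := fun k hk =>
    hc.mem_W_of_samePort (hC.samePort k) (hC.ne_succ k) hk (hC.left_mem_M _)
  have hZ : ∀ k, v k ∈ Z := ZMod.forall_of_add_one h fun k hk =>
    hc.mem_Z_of_reachable (hC.reachable _) (hC.ne _) (hW k hk) (hC.right_mem_M _)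
  exact fun k => ⟨hZ k, by simpa using hW (k - 1) (hZ _)⟩

theorem forall_left_mem_Z (hc : N.Cond123 H X Y Z W) (hC : N.IsAlternatingCycle H u v)
    {k₀ : ZMod l} (h : u k₀ ∈ Z) : ∀ k, u k ∈ Z ∧ v k ∈ W := by
  have hW : ∀ k, u (k + 1) ∈ Z → v k ∈ W := fun k hk =>
    hc.mem_W_of_samePort (samePort_symm (hC.samePort k)) (hC.ne_succ k).symm hk
      (hC.right_mem_M _)
  have hZ : ∀ k, u k ∈ Z := ZMod.forall_of_sub_one h fun k hk =>
    hc.mem_Z_of_reachable (hC.reachable _).symm (hC.ne _).symm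
      (hW _ (by rwa [sub_add_cancel])) (hC.left_mem_M _)
  exact fun k => ⟨hZ k, hW k (hZ _)⟩

theorem forall_left_mem_X (hc : N.Cond123 H X Y Z W) (hC : N.IsAlternatingCycle H u v)
    (hZ : ∀ k, v k ∉ Z) (hW : ∀ k, u k ∉ W) {k₀ : ZMod l} (h : u k₀ ∈ X) :
    ∀ k, u k ∈ X ∧ v k ∈ Y := by
  have hY : ∀ k, u k ∈ X → v k ∈ Y := fun k hk => by
    have hcomp := hc.eq_of_reachable (hC.reachable k) (.inl hk)
    rcases hc.mem_cases (hC.right_mem_M k) with hv | hv | hv | hv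
    · exact absurd (hcomp (.inl hv)) (hC.ne k)
    · exact hv
    · exact absurd hv (hZ k)
    · exact absurd (hcomp (.inr hv)) (hC.ne k)
  have hX : ∀ k, u k ∈ X := ZMod.forall_of_add_one h fun k hk => by
    have hport := hc.symm.eq_of_samePort (hC.samePort k) (.inl (hY k hk))
    rcases hc.mem_cases (hC.left_mem_M (k + 1)) with hu | hu | hu | hu
    · exact hu
    · exact absurd (hport (.inl hu)) (hC.ne_succ k)
    · exact absurd (hport (.inr hu)) (hC.ne_succ k)
    · exact absurd hu (hW _)
  exact fun k => ⟨hX k, hY k (hX k)⟩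

end IsAlternatingCycle

end Network

theorem cycle_lemma_general (N : Network) (H : SimpleGraph (Fin N.n))
    (X Y Z W : Finset (Fin N.n))
    (hc : N.Cond123 H X Y Z W)
    (l : ℕ) (hl : 0 < l) (u v : ZMod l → Fin N.n)
    (P : ∀ k, H.Walk (u k) (v k))
    (hpath : ∀ k, (P k).IsPath)
    (hlen : ∀ k, 0 < (P k).length)
    (hport : ∀ k, N.samePort (v k) (u (k + 1)))
    (hne : ∀ k, v k ≠ u (k + 1)) :
    (∀ k, u k ∈ X ∧ v k ∈ Y) ∨ (∀ k, v k ∈ X ∧ u k ∈ Y) ∨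
    (∀ k, u k ∈ Z ∧ v k ∈ W) ∨ (∀ k, v k ∈ Z ∧ u k ∈ W) := by
  have : NeZero l := ⟨hl.ne'⟩
  have hC : N.IsAlternatingCycle H u v :=
    ⟨fun k => (P k).reachable, fun k => (hpath k).ne_of_length_pos (hlen k), hport, hne⟩
  by_cases hZW : ∃ k, u k ∈ Z ∨ v k ∈ Z ∨ u k ∈ W ∨ v k ∈ W
  · right; right
    obtain ⟨k, huZ | hvZ | huW | hvW⟩ := hZW
    · exact .inl (hC.forall_left_mem_Z hc huZ)
    · exact .inr (hC.forall_right_mem_Z hc hvZ)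
    · exact .inr (hC.forall_right_mem_Z hc
        (hc.mem_Z_of_reachable (hC.reachable k) (hC.ne k) huW (hC.right_mem_M k)))
    · exact .inl (hC.forall_left_mem_Z hc
        (hc.mem_Z_of_reachable (hC.reachable k).symm (hC.ne k).symm hvW (hC.left_mem_M k)))
  · push Not at hZW
    have hvZ k := (hZW k).2.1
    have huW k := (hZW k).2.2.1
    rcases hc.mem_cases (hC.left_mem_M 0) with hX | hY | hZ | hW
    · exact .inl (hC.forall_left_mem_X hc hvZ huW hX)
    · exact .inr (.inl fun k => (hC.forall_left_mem_X hc.symm hvZ huW hY k).symm)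
    · exact absurd hZ (hZW 0).1
    · exact absurd hW (hZW 0).2.2.1

/-- **Lemma 8.7 (the cycle lemma)**.  Let a spanning forest `H` and a partition
`X ⊔ Y ⊔ Z ⊔ W = M` satisfy conditions (1)–(3).  Suppose a simple oriented cycle in the
quotient `H/∼` splits in `H` into pairwise disjoint nontrivial paths
`u 0 … v 0, u 1 … v 1, …` (indexed cyclically by `ZMod l`), so that consecutive endpoints
`v k` and `u (k+1)` are distinct vertices of one superport and the junction classes
`[v k]` are pairwise distinct.  Then, up to the reversal of the cycle direction, either
all `u k ∈ X` and all `v k ∈ Y`, or all `u k ∈ Z` and all `v k ∈ W`. -/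
theorem cycle_lemma (N : Network) (H : SimpleGraph (Fin N.n))
    (hH : N.IsSpanningForest H) (X Y Z W : Finset (Fin N.n))
    (hc : N.Cond123 H X Y Z W)
    (l : ℕ) (hl : 0 < l) (u v : ZMod l → Fin N.n)
    (P : ∀ k, H.Walk (u k) (v k))
    (hpath : ∀ k, (P k).IsPath)
    (hlen : ∀ k, 0 < (P k).length)
    (hdisj : ∀ k k', k ≠ k' → ∀ x ∈ (P k).support, x ∉ (P k').support)
    (hport : ∀ k, N.samePort (v k) (u (k + 1)))
    (hne : ∀ k, v k ≠ u (k + 1))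
    (hjunction : ∀ k k' : ZMod l,
      Quotient.mk (N.xSetoid ∅) (v k) = Quotient.mk (N.xSetoid ∅) (v k') → k = k') :
    (∀ k, u k ∈ X ∧ v k ∈ Y) ∨ (∀ k, v k ∈ X ∧ u k ∈ Y) ∨
    (∀ k, u k ∈ Z ∧ v k ∈ W) ∨ (∀ k, v k ∈ Z ∧ u k ∈ W) :=
  cycle_lemma_general N H X Y Z W hc l hl u v P hpath hlen hport hne

end Superport
end
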